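/- For every λ > 0 there exists a unique κ ∈ ℝ such that κ(1-Φ(κ))/Φ'(κ) = 1 - λ/2. Moreover κ > 0 if 0 < λ < 2, κ = 0 if λ = 2, and κ < 0 if λ > 2. -/

import Mathlib

/-!
Write `U x = φ x - x (1 - Φ x)` and `G x = (1 + x²)(1 - Φ x) - x φ x`. Using `φ' = -x φ` one finds
`U' = -(1 - Φ) < 0`, `G' = -2U` and `g' = G / φ`. The Gaussian tail makes `U` and `G` vanish at
`+∞`, so `U > 0`, hence `G` is strictly decreasing and `G > 0` as well (these are Gordon's bounds
`x φ / (1 + x²) < 1 - Φ < φ / x` on the Mills ratio). So `g` is strictly increasing with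
`g 0 = 0`; since `g κ ≤ c κ` for `κ ≤ 0` and some `c > 0`, and `g κ > κ² / (1 + κ²)` for
`κ > 0`, it attains every value below `1`.
-/

open Real MeasureTheory Filter

/-- The standard normal CDF. -/
noncomputable def Phi (x : ℝ) : ℝ := ∫ t in Set.Iic x, (Real.sqrt (2 * Real.pi))⁻¹ * Real.exp (-t ^ 2 / 2)

/-- The standard normal density. -/
noncomputable def phi (x : ℝ) : ℝ := (Real.sqrt (2 * Real.pi))⁻¹ * Real.exp (-x ^ 2 / 2)

/-- The function `g(κ) = κ(1-Φ(κ))/Φ'(κ)`. -/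
noncomputable def g (κ : ℝ) : ℝ := κ * (1 - Phi κ) / phi κ

open Set Topology ProbabilityTheory

lemma StrictAnti.lt_of_tendsto_atTop {α β : Type*} [LinearOrder α] [NoMaxOrder α]
    [TopologicalSpace β] [Preorder β] [OrderClosedTopology β] {f : α → β} {a : β}
    (hf : StrictAnti f) (ha : Tendsto f atTop (𝓝 a)) (x : α) : a < f x :=
  let ⟨y, hxy⟩ := exists_gt x
  (hf.antitone.le_of_tendsto ha y).trans_lt (hf hxy)

lemma pos_of_hasDerivAt_neg_of_tendsto_atTop_zero {f f' : ℝ → ℝ}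
    (hf : ∀ x, HasDerivAt f (f' x) x) (hf' : ∀ x, f' x < 0) (hlim : Tendsto f atTop (𝓝 0))
    (x : ℝ) : 0 < f x :=
  (strictAnti_of_hasDerivAt_neg hf hf').lt_of_tendsto_atTop hlim x

lemma tendsto_pow_mul_of_le_mul_exp_neg {f : ℝ → ℝ} {C : ℝ}
    (hf : ∀ᶠ x in atTop, 0 ≤ f x ∧ f x ≤ C * exp (-x)) (n : ℕ) :
    Tendsto (fun x ↦ x ^ n * f x) atTop (𝓝 0) := by
  have hbound : Tendsto (fun x ↦ C * (x ^ n * exp (-x))) atTop (𝓝 0) := by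
    simpa using (tendsto_pow_mul_exp_neg_atTop_nhds_zero n).const_mul C
  refine squeeze_zero_norm' ?_ hbound
  filter_upwards [hf, eventually_ge_atTop 0] with x ⟨hf0, hfC⟩ hx
  rw [norm_mul, norm_of_nonneg (pow_nonneg hx n), norm_of_nonneg hf0, mul_left_comm]
  exact mul_le_mul_of_nonneg_left hfC (pow_nonneg hx n)

lemma phi_eq_gaussianPDFReal : phi = gaussianPDFReal 0 1 := by
  ext x
  simp [phi, gaussianPDFReal]

lemma phi_pos (x : ℝ) : 0 < phi x := by
  rw [phi_eq_gaussianPDFReal]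
  exact gaussianPDFReal_pos 0 1 x one_ne_zero

lemma continuous_phi : Continuous phi := by
  unfold phi
  fun_prop

lemma integrable_phi : Integrable phi := by
  rw [phi_eq_gaussianPDFReal]
  exact integrable_gaussianPDFReal 0 1

lemma integral_phi : ∫ x, phi x = 1 := by
  rw [phi_eq_gaussianPDFReal]
  exact integral_gaussianPDFReal_eq_one 0 one_ne_zero

lemma hasDerivAt_phi (x : ℝ) : HasDerivAt phi (-x * phi x) x := by
  have hexp : HasDerivAt (fun t ↦ -t ^ 2 / 2) (-x) x := by
    exact (((hasDerivAt_pow 2 x).neg).div_const 2).congr_deriv (by norm_num; ring)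
  exact (hexp.exp.const_mul _).congr_deriv (by unfold phi; ring)

lemma phi_le_phi_zero (x : ℝ) : phi x ≤ phi 0 :=
  mul_le_mul_of_nonneg_left (exp_le_exp.mpr (by nlinarith [sq_nonneg x])) (by positivity)

lemma phi_le_mul_exp_neg {x : ℝ} (hx : 2 ≤ x) : phi x ≤ (√(2 * π))⁻¹ * exp (-x) := by
  unfold phi
  gcongr
  nlinarith

lemma one_sub_Phi_eq_integral (x : ℝ) : 1 - Phi x = ∫ t in Ioi x, phi t := by
  have hsplit := integral_add_compl (measurableSet_Iic (a := x)) integrable_phi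
  rw [compl_Iic, integral_phi] at hsplit
  rw [← hsplit, Phi]
  simp [phi]

lemma one_sub_Phi_pos (x : ℝ) : 0 < 1 - Phi x := by
  rw [one_sub_Phi_eq_integral, setIntegral_pos_iff_support_of_nonneg_ae
    (ae_of_all _ fun t ↦ (phi_pos t).le) integrable_phi.integrableOn]
  simp [Function.support, (phi_pos _).ne']

lemma one_sub_Phi_le_mul_exp_neg {x : ℝ} (hx : 2 ≤ x) :
    1 - Phi x ≤ (√(2 * π))⁻¹ * exp (-x) := by
  have hexp : IntegrableOn (fun t ↦ (√(2 * π))⁻¹ * exp (-t)) (Ioi x) := by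
    have h := exp_neg_integrableOn_Ioi x one_pos
    simp only [neg_mul, one_mul] at h
    exact h.const_mul _
  calc 1 - Phi x = ∫ t in Ioi x, phi t := one_sub_Phi_eq_integral x
    _ ≤ ∫ t in Ioi x, (√(2 * π))⁻¹ * exp (-t) :=
      setIntegral_mono_on integrable_phi.integrableOn hexp measurableSet_Ioi
        fun t ht ↦ phi_le_mul_exp_neg (hx.trans (le_of_lt ht))
    _ = (√(2 * π))⁻¹ * exp (-x) := by rw [integral_const_mul, integral_exp_neg_Ioi]

lemma hasDerivAt_Phi (x : ℝ) : HasDerivAt Phi (phi x) x := by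
  have hPhi : ∀ y, Phi y = Phi 0 + ∫ t in (0 : ℝ)..y, phi t := fun y ↦ by
    rw [← intervalIntegral.integral_Iic_sub_Iic integrable_phi.integrableOn
      integrable_phi.integrableOn]
    simp [Phi, phi]
  rw [funext hPhi]
  exact (intervalIntegral.integral_hasDerivAt_right integrable_phi.intervalIntegrable
    continuous_phi.aestronglyMeasurable.stronglyMeasurableAtFilter
    continuous_phi.continuousAt).const_add _

lemma monotone_Phi : Monotone Phi :=
  (strictMono_of_hasDerivAt_pos hasDerivAt_Phi phi_pos).monotone

lemma tendsto_pow_mul_one_sub_Phi (n : ℕ) :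
    Tendsto (fun x ↦ x ^ n * (1 - Phi x)) atTop (𝓝 0) :=
  tendsto_pow_mul_of_le_mul_exp_neg ((eventually_ge_atTop 2).mono
    fun _ hx ↦ ⟨(one_sub_Phi_pos _).le, one_sub_Phi_le_mul_exp_neg hx⟩) n

lemma tendsto_pow_mul_phi (n : ℕ) : Tendsto (fun x ↦ x ^ n * phi x) atTop (𝓝 0) :=
  tendsto_pow_mul_of_le_mul_exp_neg ((eventually_ge_atTop 2).mono
    fun _ hx ↦ ⟨(phi_pos _).le, phi_le_mul_exp_neg hx⟩) n

noncomputable def millsUpperGap (x : ℝ) : ℝ := phi x - x * (1 - Phi x)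

noncomputable def millsLowerGap (x : ℝ) : ℝ := (1 + x ^ 2) * (1 - Phi x) - x * phi x

lemma hasDerivAt_mul_one_sub_Phi (x : ℝ) :
    HasDerivAt (fun y ↦ y * (1 - Phi y)) (1 - Phi x - x * phi x) x :=
  ((hasDerivAt_id x).mul ((hasDerivAt_Phi x).const_sub 1)).congr_deriv (by simp only [id]; ring)

lemma hasDerivAt_millsUpperGap (x : ℝ) : HasDerivAt millsUpperGap (-(1 - Phi x)) x :=
  ((hasDerivAt_phi x).sub (hasDerivAt_mul_one_sub_Phi x)).congr_deriv (by ring)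

lemma millsUpperGap_pos (x : ℝ) : 0 < millsUpperGap x := by
  refine pos_of_hasDerivAt_neg_of_tendsto_atTop_zero hasDerivAt_millsUpperGap
    (fun y ↦ neg_neg_of_pos (one_sub_Phi_pos y)) ?_ x
  simpa using ((tendsto_pow_mul_phi 0).sub (tendsto_pow_mul_one_sub_Phi 1)).congr
    fun y ↦ by simp [millsUpperGap]

lemma hasDerivAt_millsLowerGap (x : ℝ) :
    HasDerivAt millsLowerGap (-2 * millsUpperGap x) x := by
  have hsq : HasDerivAt (fun y ↦ 1 + y ^ 2) (2 * x) x := by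
    simpa using (hasDerivAt_pow 2 x).const_add 1
  refine ((hsq.mul ((hasDerivAt_Phi x).const_sub 1)).sub
    ((hasDerivAt_id x).mul (hasDerivAt_phi x))).congr_deriv ?_
  simp only [millsUpperGap, id]
  ring

lemma millsLowerGap_pos (x : ℝ) : 0 < millsLowerGap x := by
  refine pos_of_hasDerivAt_neg_of_tendsto_atTop_zero hasDerivAt_millsLowerGap
    (fun y ↦ by linarith [millsUpperGap_pos y]) ?_ x
  simpa using (((tendsto_pow_mul_one_sub_Phi 0).add (tendsto_pow_mul_one_sub_Phi 2)).sub
    (tendsto_pow_mul_phi 1)).congr fun y ↦ by simp only [millsLowerGap]; ring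

lemma hasDerivAt_g (x : ℝ) : HasDerivAt g (millsLowerGap x / phi x) x := by
  refine ((hasDerivAt_mul_one_sub_Phi x).div (hasDerivAt_phi x) (phi_pos x).ne').congr_deriv ?_
  rw [millsLowerGap, div_eq_div_iff (pow_ne_zero 2 (phi_pos x).ne') (phi_pos x).ne']
  ring

lemma strictMono_g : StrictMono g :=
  strictMono_of_hasDerivAt_pos hasDerivAt_g fun x ↦ div_pos (millsLowerGap_pos x) (phi_pos x)

lemma continuous_g : Continuous g :=
  continuous_iff_continuousAt.mpr fun x ↦ (hasDerivAt_g x).continuousAt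

lemma g_zero : g 0 = 0 := by simp [g]

lemma g_le_mul_of_nonpos {x : ℝ} (hx : x ≤ 0) : g x ≤ x * ((1 - Phi 0) / phi 0) := by
  have hratio : (1 - Phi 0) / phi 0 ≤ (1 - Phi x) / phi x :=
    div_le_div₀ (one_sub_Phi_pos x).le (by linarith [monotone_Phi hx]) (phi_pos x)
      (phi_le_phi_zero x)
  rw [g, mul_div_assoc]
  exact mul_le_mul_of_nonpos_left hratio hx

lemma one_sub_inv_lt_g {x : ℝ} (hx : 0 < x) : 1 - (1 + x ^ 2)⁻¹ < g x := by
  have hgap := mul_lt_mul_of_pos_left (sub_pos.mp (millsLowerGap_pos x)) hx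
  have hpos : 0 < 1 + x ^ 2 := by positivity
  rw [g, lt_div_iff₀ (phi_pos x), show 1 - (1 + x ^ 2)⁻¹ = x ^ 2 / (1 + x ^ 2) by field_simp; ring,
    div_mul_eq_mul_div, div_lt_iff₀ hpos]
  linarith

lemma tendsto_g_atBot : Tendsto g atBot atBot :=
  tendsto_atBot_mono' _ ((eventually_le_atBot 0).mono fun _ hx ↦ g_le_mul_of_nonpos hx)
    (tendsto_id.atBot_mul_const (div_pos (one_sub_Phi_pos 0) (phi_pos 0)))

lemma exists_g_eq_of_lt_one {c : ℝ} (hc : c < 1) : ∃ κ, g κ = c := by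
  have hlower : Tendsto (fun x : ℝ ↦ 1 - (1 + x ^ 2)⁻¹) atTop (𝓝 1) := by
    simpa using (tendsto_inv_atTop_zero.comp
      (tendsto_atTop_add_const_left _ 1 (tendsto_pow_atTop (α := ℝ) two_ne_zero))).const_sub 1
  obtain ⟨b, hcb, hb⟩ := ((hlower.eventually (eventually_gt_nhds hc)).and
    (eventually_gt_atTop 0)).exists
  exact mem_range_of_exists_le_of_exists_ge continuous_g
    (tendsto_g_atBot.eventually_le_atBot c).exists ⟨b, (hcb.trans (one_sub_inv_lt_g hb)).le⟩

/-- unique solution of g(κ) = 1 - λ/2, with the sign of κ determined by λ. -/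
theorem stmt1 (lam : ℝ) (hlam : 0 < lam) :
    (∃! κ : ℝ, g κ = 1 - lam / 2) ∧
    ∀ κ : ℝ, g κ = 1 - lam / 2 →
      ((lam < 2 → 0 < κ) ∧ (lam = 2 → κ = 0) ∧ (2 < lam → κ < 0)) := by
  obtain ⟨κ₀, hκ₀⟩ := exists_g_eq_of_lt_one (show 1 - lam / 2 < 1 by linarith)
  refine ⟨⟨κ₀, hκ₀, fun κ hκ ↦ strictMono_g.injective (hκ.trans hκ₀.symm)⟩, fun κ hκ ↦ ?_⟩
  refine ⟨fun h ↦ ?_, fun h ↦ ?_, fun h ↦ ?_⟩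
  · exact strictMono_g.lt_iff_lt.mp (by rw [g_zero, hκ]; linarith)
  · exact strictMono_g.injective (by rw [hκ, g_zero, h]; norm_num)
  · exact strictMono_g.lt_iff_lt.mp (by rw [g_zero, hκ]; linarith)
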